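/- arXiv:1411.7819 — 2 statements merged into one kernel-verified Lean document; each statement's English description precedes it below -/
import Mathlib

section
/- Let (M, δ) be a finite metric space, let 2 ≤ k < |M|, and let R_OPT = min over all k-point subsets P of M of the maximum gap R_P^M. Let 0 < ε₁ < 1 and let C ⊆ M be such that every point of M is at distance at most ε₁·R_OPT from C. Then for every k-point subset P ⊆ C, (1 − ε₁)·R_P^M ≤ R_P^C; consequently GR_P^M ≤ (1 + ε₁/(1 − ε₁))·GR_P^C, i.e., C is a (k, ε₁/(1−ε₁))-coreset of M. -/
/-!
Every point `q` of `M` lies within `ε₁ · R_OPT` of some `c ∈ C`, and `c` lies within `R_P^C`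
of `P`; hence `R_P^M ≤ ε₁ · R_OPT + R_P^C ≤ ε₁ · R_P^M + R_P^C`, because `R_OPT` minimises the
maximum gap over all `k`-point sets. The gap ratios share the denominator `r_P ≥ 0`.
-/

open Metric

/-- Minimum gap of a point set `P`: half the least pairwise distance. -/
noncomputable def minGap {E : Type*} [MetricSpace E] (P : Set E) : ℝ :=
  sInf {d : ℝ | ∃ p ∈ P, ∃ q ∈ P, p ≠ q ∧ d = dist p q} / 2

/-- Maximum gap of `P` over the space `X`: the covering radius of `P` in `X`. -/
noncomputable def maxGap {E : Type*} [MetricSpace E] (X P : Set E) : ℝ :=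
  sSup ((fun q => Metric.infDist q P) '' X)

/-- Gap ratio of `P` over the space `X`. -/
noncomputable def gapRatio {E : Type*} [MetricSpace E] (X P : Set E) : ℝ :=
  maxGap X P / minGap P

open Set

section Gaps

variable {E : Type*} [MetricSpace E]

theorem maxGap_nonneg (X P : Set E) : 0 ≤ maxGap X P :=
  Real.sSup_nonneg <| by rintro _ ⟨q, -, rfl⟩; exact infDist_nonneg

theorem minGap_nonneg (P : Set E) : 0 ≤ minGap P :=
  div_nonneg (Real.sInf_nonneg <| by rintro _ ⟨p, -, q, -, -, rfl⟩; exact dist_nonneg) zero_le_two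

theorem infDist_le_maxGap {X : Set E} (hX : X.Finite) (P : Set E) {q : E} (hq : q ∈ X) :
    infDist q P ≤ maxGap X P :=
  le_csSup (hX.image _).bddAbove (mem_image_of_mem _ hq)

theorem maxGap_le_add_of_infDist_le {X C : Set E} (P : Set E) (hX : X.Nonempty)
    (hC : C.Finite) (hCne : C.Nonempty) {δ : ℝ} (hδ : ∀ x ∈ X, infDist x C ≤ δ) :
    maxGap X P ≤ δ + maxGap C P := by
  refine csSup_le (hX.image _) ?_
  rintro _ ⟨q, hq, rfl⟩
  obtain ⟨c, hc, hqc⟩ := hC.isCompact.exists_infDist_eq_dist hCne q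
  calc infDist q P ≤ infDist c P + dist q c := infDist_le_infDist_add_dist
    _ ≤ maxGap C P + δ := add_le_add (infDist_le_maxGap hC P hc) (hqc ▸ hδ q hq)
    _ = δ + maxGap C P := add_comm _ _

theorem gapRatio_le_mul_of_maxGap_le {X Y P : Set E} {c : ℝ}
    (h : maxGap X P ≤ c * maxGap Y P) : gapRatio X P ≤ c * gapRatio Y P := by
  rw [gapRatio, gapRatio, ← mul_div_assoc]
  exact div_le_div_of_nonneg_right h (minGap_nonneg P)

end Gaps

theorem stmt11_general {M : Type*} [MetricSpace M] [Finite M] (k : ℕ)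
    (hk : 2 ≤ k)
    (ROPT : ℝ)
    (hROPT : ROPT = sInf {r : ℝ | ∃ P : Set M, P.ncard = k ∧ r = maxGap Set.univ P})
    (ε₁ : ℝ) (hε₁ : 0 < ε₁) (hε₁' : ε₁ < 1)
    (C : Set M) (hC : ∀ x : M, Metric.infDist x C ≤ ε₁ * ROPT) :
    ∀ P : Set M, P ⊆ C → P.ncard = k →
      (1 - ε₁) * maxGap Set.univ P ≤ maxGap C P ∧
      gapRatio Set.univ P ≤ (1 + ε₁/(1-ε₁)) * gapRatio C P := by
  intro P hPC hPk
  have hPne : P.Nonempty := nonempty_of_ncard_ne_zero (by omega)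
  have hROPT_le : ROPT ≤ maxGap univ P := hROPT ▸
    csInf_le ⟨0, by rintro _ ⟨Q, -, rfl⟩; exact maxGap_nonneg _ Q⟩ ⟨P, hPk, rfl⟩
  have hcover : maxGap univ P ≤ ε₁ * ROPT + maxGap C P :=
    maxGap_le_add_of_infDist_le P (hPne.mono (subset_univ P)) C.toFinite (hPne.mono hPC)
      fun x _ => hC x
  have hmain : (1 - ε₁) * maxGap univ P ≤ maxGap C P := by
    nlinarith [mul_le_mul_of_nonneg_left hROPT_le hε₁.le]
  refine ⟨hmain, gapRatio_le_mul_of_maxGap_le ?_⟩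
  have hpos : 0 < 1 - ε₁ := by linarith
  rw [show 1 + ε₁ / (1 - ε₁) = (1 - ε₁)⁻¹ by field_simp; ring, ← div_eq_inv_mul,
    le_div_iff₀ hpos, mul_comm]
  exact hmain

/-- Coreset property: if every point of a finite metric space `M` is within
distance `ε₁·R_OPT` of `C`, then for every `k`-point subset `P ⊆ C` we have
`(1 − ε₁)·R_P^M ≤ R_P^C`, and hence
`GR_P^M ≤ (1 + ε₁/(1−ε₁))·GR_P^C`. -/
theorem stmt11 {M : Type*} [MetricSpace M] [Finite M] (k : ℕ)
    (hk : 2 ≤ k) (hkM : k < Nat.card M)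
    (ROPT : ℝ)
    (hROPT : ROPT = sInf {r : ℝ | ∃ P : Set M, P.ncard = k ∧ r = maxGap Set.univ P})
    (ε₁ : ℝ) (hε₁ : 0 < ε₁) (hε₁' : ε₁ < 1)
    (C : Set M) (hC : ∀ x : M, Metric.infDist x C ≤ ε₁ * ROPT) :
    ∀ P : Set M, P ⊆ C → P.ncard = k →
      (1 - ε₁) * maxGap Set.univ P ≤ maxGap C P ∧
      gapRatio Set.univ P ≤ (1 + ε₁/(1-ε₁)) * gapRatio C P :=
  stmt11_general k hk ROPT hROPT ε₁ hε₁ hε₁' C hC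
end

section
/- Let q > l > 2 and k ≥ 2. Let D_1, …, D_k be closed disks of diameter 1 in ℝ² whose centers are pairwise at Euclidean distance at least l, fix an index i, and let M = ∂D_i ∪ ⋃_{j ≠ i} D_j (the i-th disk replaced by its bounding circle), with the metric induced from ℝ². If P ⊆ M has |P| = k and gap ratio GR_P ≤ 2/q, then the circle ∂D_i and each disk D_j (j ≠ i) contains exactly one point of P, and any two distinct points of P are at distance at least q. -/
open Metric

/-!
If some point of `M` is at distance at least `ρ` from all of `P`, the maximum gap is at least `ρ`,
and a gap ratio at most `2 / q` forces all pairwise distances in `P` to be at least `q ρ`.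
Two points of `P` in one disk would, by counting, leave another disk empty; a boundary point of
that disk is at distance at least `1` from `P`, so pairwise distances would be at least `q > 1`,
too large for two points of a disk of diameter `1`. Hence each disk, the `i`-th one through its
circle, carries exactly one point of `P`. The antipode on the circle of the point lying there is
at distance at least `1` from `P`, which gives pairwise distances at least `q`.
-/

open Set Function

theorem Set.forall_subsingleton_inter_iff_forall_nonempty_inter {α ι : Type*} [Finite ι]
    {S : ι → Set α} (hS : Pairwise (Disjoint on S)) {P : Set α} (hfin : P.Finite)
    (hcover : P ⊆ ⋃ j, S j) (hcard : P.ncard = Nat.card ι) :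
    (∀ j, (P ∩ S j).Subsingleton) ↔ ∀ j, (P ∩ S j).Nonempty := by
  have : Finite P := hfin.to_subtype
  choose g hg using fun p : P => mem_iUnion.1 (hcover p.2)
  have hg_eq : ∀ (p : P) j, (p : α) ∈ S j → g p = j := fun p j hp =>
    of_not_not fun hne => (hS hne).ne_of_mem (hg p) hp rfl
  have hcard' : Nat.card P = Nat.card ι := by rw [Nat.card_coe_set_eq, hcard]
  have hinj : Injective g ↔ ∀ j, (P ∩ S j).Subsingleton := by
    refine ⟨fun h j p hp p' hp' => ?_, fun h p p' hpp' => ?_⟩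
    · exact congrArg Subtype.val <|
        h ((hg_eq ⟨p, hp.1⟩ j hp.2).trans (hg_eq ⟨p', hp'.1⟩ j hp'.2).symm)
    · exact Subtype.ext (h (g p') ⟨p.2, hpp' ▸ hg p⟩ ⟨p'.2, hg p'⟩)
  have hsurj : Surjective g ↔ ∀ j, (P ∩ S j).Nonempty := by
    refine ⟨fun h j => ?_, fun h j => ?_⟩
    · obtain ⟨p, rfl⟩ := h j
      exact ⟨p, p.2, hg p⟩
    · obtain ⟨p, hp, hpj⟩ := h j
      exact ⟨⟨p, hp⟩, hg_eq ⟨p, hp⟩ j hpj⟩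
  rw [← hinj, ← hsurj]
  exact ⟨fun h => (h.bijective_of_nat_card_le hcard'.ge).2,
    fun h => (h.bijective_of_nat_card_le hcard'.le).1⟩

section GapRatio

variable {E : Type*} [MetricSpace E] {X P : Set E}

theorem minGap_le_half_dist {p p' : E} (hp : p ∈ P) (hp' : p' ∈ P) (hne : p ≠ p') :
    minGap P ≤ dist p p' / 2 := by
  unfold minGap
  gcongr
  exact csInf_le ⟨0, by rintro _ ⟨_, -, _, -, -, rfl⟩; exact dist_nonneg⟩ ⟨p, hp, p', hp', hne, rfl⟩

theorem minGap_pos (hfin : P.Finite) {p p' : E} (hp : p ∈ P) (hp' : p' ∈ P) (hne : p ≠ p') :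
    0 < minGap P := by
  set D := {d : ℝ | ∃ p ∈ P, ∃ q ∈ P, p ≠ q ∧ d = dist p q}
  have hDfin : D.Finite := ((hfin.prod hfin).image fun x => dist x.1 x.2).subset <| by
    rintro _ ⟨p, hp, q, hq, -, rfl⟩
    exact ⟨(p, q), ⟨hp, hq⟩, rfl⟩
  have hDne : D.Nonempty := ⟨_, p, hp, p', hp', hne, rfl⟩
  obtain ⟨a, -, b, -, hab, hD⟩ := hDne.csInf_mem hDfin
  exact half_pos (hD ▸ dist_pos.2 hab)

theorem infDist_le_maxGap_s17 (hX : Bornology.IsBounded X) (hP : P.Nonempty) {x : E} (hx : x ∈ X) :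
    infDist x P ≤ maxGap X P := by
  obtain ⟨p, hp⟩ := hP
  obtain ⟨R, hR⟩ := hX.subset_closedBall p
  refine le_csSup ⟨R, ?_⟩ ⟨x, hx, rfl⟩
  rintro _ ⟨y, hy, rfl⟩
  exact (infDist_le_dist_of_mem hp).trans (hR hy)

theorem mul_le_dist_of_gapRatio_le {q ρ : ℝ} (hq : 0 < q) (hGR : gapRatio X P ≤ 2 / q)
    (hX : Bornology.IsBounded X) (hfin : P.Finite) {x : E} (hx : x ∈ X)
    (hρ : ∀ p ∈ P, ρ ≤ dist x p) {p p' : E} (hp : p ∈ P) (hp' : p' ∈ P) (hne : p ≠ p') :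
    q * ρ ≤ dist p p' := by
  have hmin := minGap_pos hfin hp hp' hne
  have hmax : ρ ≤ maxGap X P :=
    ((le_infDist ⟨p, hp⟩).2 hρ).trans (infDist_le_maxGap_s17 hX ⟨p, hp⟩ hx)
  rw [gapRatio, div_le_iff₀ hmin] at hGR
  calc q * ρ ≤ q * (2 / q * minGap P) := by gcongr; exact hmax.trans hGR
    _ = 2 * minGap P := by field_simp
    _ ≤ dist p p' := by linarith [minGap_le_half_dist hp hp' hne]

end GapRatio

theorem two_mul_le_dist_of_mem_closedBall {E : Type*} [PseudoMetricSpace E] {a b x y : E}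
    {r : ℝ} (hab : 4 * r ≤ dist a b) (hx : x ∈ closedBall a r) (hy : y ∈ closedBall b r) :
    2 * r ≤ dist x y := by
  rw [mem_closedBall] at hx hy
  linarith [dist_triangle4 a x y b, dist_comm a x]

section DisksWithCircle

variable {E : Type*} [MetricSpace E] {k : ℕ} {c : Fin k → E} {r : ℝ} {i : Fin k}

variable (c r i) in
def disksWithCircle : Set E :=
  sphere (c i) r ∪ ⋃ j ∈ ({i}ᶜ : Set (Fin k)), closedBall (c j) r

theorem sphere_subset_disksWithCircle (j : Fin k) : sphere (c j) r ⊆ disksWithCircle c r i := by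
  obtain rfl | hj := eq_or_ne j i
  · exact subset_union_left
  · exact sphere_subset_closedBall.trans <|
      (subset_biUnion_of_mem (u := fun j => closedBall (c j) r) hj).trans subset_union_right

theorem disksWithCircle_subset_iUnion : disksWithCircle c r i ⊆ ⋃ j, closedBall (c j) r :=
  union_subset (sphere_subset_closedBall.trans (subset_iUnion (fun j => closedBall (c j) r) i))
    (iUnion₂_subset fun j _ => subset_iUnion (fun j => closedBall (c j) r) j)

theorem isBounded_disksWithCircle : Bornology.IsBounded (disksWithCircle c r i) :=
  isBounded_sphere.union <|
    (Bornology.isBounded_biUnion (toFinite _)).2 fun _ _ => isBounded_closedBall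

theorem mem_sphere_of_mem_disksWithCircle
    (hdisj : Pairwise (Disjoint on fun j => closedBall (c j) r)) {x : E}
    (hx : x ∈ disksWithCircle c r i) (hxi : x ∈ closedBall (c i) r) : x ∈ sphere (c i) r := by
  refine hx.resolve_right fun h => ?_
  obtain ⟨j, hj, hxj⟩ := mem_iUnion₂.1 h
  exact (hdisj hj).ne_of_mem hxj hxi rfl

theorem pairwise_disjoint_closedBall_of_four_mul_le_dist (hr : 0 < r)
    (hcent : ∀ j j', j ≠ j' → 4 * r ≤ dist (c j) (c j')) :
    Pairwise (Disjoint on fun j => closedBall (c j) r) := fun j j' hjj' =>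
  disjoint_left.2 fun x hx hx' => by
    linarith [two_mul_le_dist_of_mem_closedBall (hcent j j' hjj') hx hx', dist_self x]

theorem forall_subsingleton_inter_closedBall_iff {P : Set E} (hr : 0 < r)
    (hcent : ∀ j j', j ≠ j' → 4 * r ≤ dist (c j) (c j')) (hPM : P ⊆ disksWithCircle c r i)
    (hPk : P.ncard = k) :
    (∀ j, (P ∩ closedBall (c j) r).Subsingleton) ↔ ∀ j, (P ∩ closedBall (c j) r).Nonempty :=
  forall_subsingleton_inter_iff_forall_nonempty_inter
    (pairwise_disjoint_closedBall_of_four_mul_le_dist hr hcent) (finite_of_ncard_pos (hPk ▸ i.pos))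
    (hPM.trans disksWithCircle_subset_iUnion) (by rw [hPk, Nat.card_fin])

end DisksWithCircle

section GapRatioOnDisksWithCircle

variable {E : Type*} [NormedAddCommGroup E] [NormedSpace ℝ E] [Nontrivial E] {k : ℕ}
  {c : Fin k → E} {r q : ℝ} {i : Fin k} {P : Set E}
  (hr : 0 < r) (hcent : ∀ j j', j ≠ j' → 4 * r ≤ dist (c j) (c j')) (hq : 1 < q)
  (hPM : P ⊆ disksWithCircle c r i) (hPk : P.ncard = k)
  (hGR : gapRatio (disksWithCircle c r i) P ≤ 2 / q)
include hr hcent hq hPM hPk hGR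

theorem subsingleton_inter_closedBall (j : Fin k) : (P ∩ closedBall (c j) r).Subsingleton := by
  have hfin : P.Finite := finite_of_ncard_pos (hPk ▸ i.pos)
  by_contra hj
  obtain ⟨p, hp, p', hp', hne⟩ := not_subsingleton_iff.1 hj
  obtain ⟨j₀, hj₀⟩ : ∃ j₀, P ∩ closedBall (c j₀) r = ∅ := by
    by_contra! hall
    exact hj <| (forall_subsingleton_inter_closedBall_iff hr hcent hPM hPk).2 hall j
  obtain ⟨m, hm⟩ := (NormedSpace.sphere_nonempty (x := c j₀)).2 hr.le
  have hfar : ∀ p'' ∈ P, 2 * r ≤ dist m p'' := fun p'' hp'' => by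
    obtain ⟨j', hj'⟩ := mem_iUnion.1 (disksWithCircle_subset_iUnion (hPM hp''))
    have hj₀j' : j₀ ≠ j' := by
      rintro rfl
      exact hj₀.subset ⟨hp'', hj'⟩
    exact two_mul_le_dist_of_mem_closedBall (hcent _ _ hj₀j') (sphere_subset_closedBall hm) hj'
  have hfar_pair := mul_le_dist_of_gapRatio_le (by linarith) hGR isBounded_disksWithCircle hfin
    (sphere_subset_disksWithCircle j₀ hm) hfar hp.1 hp'.1 hne
  have hnear : dist p p' ≤ 2 * r := by
    linarith [mem_closedBall.1 hp.2, mem_closedBall.1 hp'.2, dist_triangle_right p p' (c j)]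
  nlinarith

theorem existsUnique_mem_closedBall (j : Fin k) : ∃! p, p ∈ P ∧ p ∈ closedBall (c j) r := by
  have hsub := subsingleton_inter_closedBall hr hcent hq hPM hPk hGR
  obtain ⟨p, hp⟩ := (forall_subsingleton_inter_closedBall_iff hr hcent hPM hPk).1 hsub j
  exact ⟨p, hp, fun p' hp' => hsub j hp' hp⟩

theorem existsUnique_mem_sphere : ∃! p, p ∈ P ∧ p ∈ sphere (c i) r := by
  obtain ⟨p, hp, huniq⟩ := existsUnique_mem_closedBall hr hcent hq hPM hPk hGR i
  refine ⟨p, ⟨hp.1, ?_⟩, fun p' hp' => huniq p' ⟨hp'.1, sphere_subset_closedBall hp'.2⟩⟩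
  exact mem_sphere_of_mem_disksWithCircle
    (pairwise_disjoint_closedBall_of_four_mul_le_dist hr hcent) (hPM hp.1) hp.2

theorem mul_two_mul_le_dist {p p' : E} (hp : p ∈ P) (hp' : p' ∈ P) (hne : p ≠ p') :
    q * (2 * r) ≤ dist p p' := by
  obtain ⟨p₀, ⟨hp₀, hp₀i⟩, -⟩ := existsUnique_mem_sphere hr hcent hq hPM hPk hGR
  set m := Equiv.pointReflection (c i) p₀
  have hm : m ∈ sphere (c i) r := by
    rw [mem_sphere, dist_pointReflection_left, dist_comm]
    exact hp₀i
  have hfar : ∀ p'' ∈ P, 2 * r ≤ dist m p'' := by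
    intro p'' hp''
    by_cases h : p'' = p₀
    · rw [h, dist_pointReflection_right ℝ, Real.norm_two, dist_comm, mem_sphere.1 hp₀i]
    obtain ⟨j, hj⟩ := mem_iUnion.1 (disksWithCircle_subset_iUnion (hPM hp''))
    have hij : i ≠ j := by
      rintro rfl
      exact h (subsingleton_inter_closedBall hr hcent hq hPM hPk hGR i ⟨hp'', hj⟩
        ⟨hp₀, sphere_subset_closedBall hp₀i⟩)
    exact two_mul_le_dist_of_mem_closedBall (hcent i j hij) (sphere_subset_closedBall hm) hj
  exact mul_le_dist_of_gapRatio_le (by linarith) hGR isBounded_disksWithCircle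
    (finite_of_ncard_pos (hPk ▸ i.pos)) (sphere_subset_disksWithCircle i hm) hfar hp hp' hne

end GapRatioOnDisksWithCircle

theorem stmt17_general (q l : ℝ) (hl : 2 < l) (hql : l < q) (k : ℕ)
    (c : Fin k → EuclideanSpace ℝ (Fin 2))
    (hcent : ∀ i j, i ≠ j → l ≤ dist (c i) (c j))
    (i : Fin k)
    (M : Set (EuclideanSpace ℝ (Fin 2)))
    (hM : M = Metric.sphere (c i) (1/2) ∪
      ⋃ j ∈ ({i}ᶜ : Set (Fin k)), Metric.closedBall (c j) (1/2))
    (P : Set (EuclideanSpace ℝ (Fin 2))) (hPM : P ⊆ M) (hPk : P.ncard = k)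
    (hGR : gapRatio M P ≤ 2/q) :
    (∃! p, p ∈ P ∧ p ∈ Metric.sphere (c i) (1/2)) ∧
    (∀ j, j ≠ i → ∃! p, p ∈ P ∧ p ∈ Metric.closedBall (c j) (1/2)) ∧
    (∀ p ∈ P, ∀ p' ∈ P, p ≠ p' → q ≤ dist p p') := by
  have hcent' : ∀ j j', j ≠ j' → 4 * (1 / 2 : ℝ) ≤ dist (c j) (c j') := fun j j' h => by
    linarith [hcent j j' h]
  have hq : 1 < q := by linarith
  obtain rfl : M = disksWithCircle c (1 / 2) i := hM
  refine ⟨existsUnique_mem_sphere one_half_pos hcent' hq hPM hPk hGR,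
    fun j _ => existsUnique_mem_closedBall one_half_pos hcent' hq hPM hPk hGR j,
    fun p hp p' hp' hne => ?_⟩
  simpa using mul_two_mul_le_dist one_half_pos hcent' hq hPM hPk hGR hp hp' hne

/-- If `q > l > 2`, the centers of `k` unit-diameter disks are pairwise at least `l`
apart, the `i`-th disk is replaced by its bounding circle, and a `k`-point set `P`
in the resulting space has gap ratio at most `2/q`, then the circle and each disk
contains exactly one point of `P` and any two distinct points of `P` are at distance
at least `q`. -/
theorem stmt17 (q l : ℝ) (hl : 2 < l) (hql : l < q) (k : ℕ) (hk : 2 ≤ k)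
    (c : Fin k → EuclideanSpace ℝ (Fin 2))
    (hcent : ∀ i j, i ≠ j → l ≤ dist (c i) (c j))
    (i : Fin k)
    (M : Set (EuclideanSpace ℝ (Fin 2)))
    (hM : M = Metric.sphere (c i) (1/2) ∪
      ⋃ j ∈ ({i}ᶜ : Set (Fin k)), Metric.closedBall (c j) (1/2))
    (P : Set (EuclideanSpace ℝ (Fin 2))) (hPM : P ⊆ M) (hPk : P.ncard = k)
    (hGR : gapRatio M P ≤ 2/q) :
    (∃! p, p ∈ P ∧ p ∈ Metric.sphere (c i) (1/2)) ∧
    (∀ j, j ≠ i → ∃! p, p ∈ P ∧ p ∈ Metric.closedBall (c j) (1/2)) ∧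
    (∀ p ∈ P, ∀ p' ∈ P, p ≠ p' → q ≤ dist p p') :=
  stmt17_general q l hl hql k c hcent i M hM P hPM hPk hGR
end
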